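/- Lemma (enabledness transfers to the MPBN): Let f be a BN of dimension n, t ∈ T_i⁺ a transition of the encoding N(f), and m a marking with enab(t,m) > 0. Then for any MP configuration x̂ with m ∈ μ(x̂) and x̂_i ∈ {0,↘}, there is an MP step x̂ → ŷ with Δ(x̂,ŷ) = {i} and ŷ_i = ↗. The symmetric statement holds for t ∈ T_i⁻ and x̂_i ∈ {1,↗} with ŷ_i = ↘. -/

import Mathlib

open Relation Filter

/-! ### Boolean networks and their semantics -/

abbrev Config (n : ℕ) := Fin n → Bool
abbrev BN (n : ℕ) := Config n → Fin n → Bool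

def Delta {n : ℕ} (x y : Config n) : Set (Fin n) := {i | x i ≠ y i}

def fa {n : ℕ} (f : BN n) (x y : Config n) : Prop :=
  ∃ i, Delta x y = {i} ∧ f x i = y i

def syn {n : ℕ} (f : BN n) (x y : Config n) : Prop := ∀ i, f x i = y i

def ga {n : ℕ} (f : BN n) (x y : Config n) : Prop := ∀ i ∈ Delta x y, f x i = y i

/-! ### Most permissive semantics -/

inductive MPV where
  | b : Bool → MPV
  | up : MPV
  | down : MPV
deriving DecidableEq

abbrev MPConfig (n : ℕ) := Fin n → MPV

def toMP {n : ℕ} (x : Config n) : MPConfig n := fun i => .b (x i)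

def beta {n : ℕ} (xh : MPConfig n) : Set (Config n) :=
  {x | ∀ i v, xh i = .b v → x i = v}

def mpStep {n : ℕ} (f : BN n) (xh yh : MPConfig n) : Prop :=
  ∃ i, (∀ j, j ≠ i → xh j = yh j) ∧ xh i ≠ yh i ∧
    ((xh i = .up ∧ yh i = .b true) ∨
     (xh i = .down ∧ yh i = .b false) ∨
     (xh i ≠ .b true ∧ yh i = .up ∧ ∃ x ∈ beta xh, f x i = true) ∨
     (xh i ≠ .b false ∧ yh i = .down ∧ ∃ x ∈ beta xh, f x i = false))

def mp {n : ℕ} (f : BN n) (x y : Config n) : Prop :=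
  ReflTransGen (mpStep f) (toMP x) (toMP y)

/-! ### Petri nets (discrete and continuous) -/

structure Net (P T : Type) where
  wPT : P → T → ℕ
  wTP : T → P → ℕ

def dfire {P T : Type} (N : Net P T) (t : T) (M M' : P → ℕ) : Prop :=
  (∀ p, N.wPT p t ≤ M p) ∧ ∀ p, M' p = M p - N.wPT p t + N.wTP t p

def dReach {P T : Type} (N : Net P T) : (P → ℕ) → (P → ℕ) → Prop :=
  ReflTransGen (fun M M' => ∃ t, dfire N t M M')

def cfire {P T : Type} (N : Net P T) (t : T) (α : ℝ) (m m' : P → ℝ) : Prop :=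
  0 ≤ α ∧ (∀ p, α * N.wPT p t ≤ m p) ∧
    ∀ p, m' p = m p - α * N.wPT p t + α * N.wTP t p

def cReach {P T : Type} (N : Net P T) : (P → ℝ) → (P → ℝ) → Prop :=
  ReflTransGen (fun m m' => ∃ t α, cfire N t α m m')

def limReach {P T : Type} (N : Net P T) (m m' : P → ℝ) : Prop :=
  ∃ ms : ℕ → P → ℝ, ms 0 = m ∧
    (∀ k, ∃ t α, cfire N t α (ms k) (ms (k+1))) ∧
    Tendsto ms atTop (nhds m')

def IsTrap {P T : Type} (N : Net P T) (S : Set P) : Prop :=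
  ∀ t, (∃ p ∈ S, 0 < N.wPT p t) → ∃ p ∈ S, 0 < N.wTP t p

def enabPos {P T : Type} (N : Net P T) (t : T) (m : P → ℝ) : Prop :=
  ∀ p, 0 < N.wPT p t → 0 < m p

def enabGe {P T : Type} (N : Net P T) (t : T) (m : P → ℝ) (c : ℝ) : Prop :=
  ∀ p, 0 < N.wPT p t → c * N.wPT p t ≤ m p

/-! ### Petri net encoding of Boolean networks -/

abbrev Clause (n : ℕ) := Fin n → Option Bool

def satC {n : ℕ} (z : Config n) (C : Clause n) : Prop :=
  ∀ j v, C j = some v → z j = v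

structure ETrans (n : ℕ) where
  i : Fin n
  s : Bool
  C : Clause n

abbrev EPlace (n : ℕ) := Fin n × Bool

def encNet (n : ℕ) : Net (EPlace n) (ETrans n) where
  wPT := fun p t =>
    if p.1 = t.i then (if p.2 = !t.s then 1 else 0)
    else (if t.C p.1 = some p.2 then 1 else 0)
  wTP := fun t p =>
    if p.1 = t.i then (if p.2 = t.s then 1 else 0)
    else (if t.C p.1 = some p.2 then 1 else 0)

def mu {n : ℕ} (xh : MPConfig n) : Set (EPlace n → ℝ) :=
  {m | (∀ p, 0 ≤ m p) ∧ ∀ i,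
    m (i, false) + m (i, true) = 1 ∧
    (∀ v, xh i = .b v → m (i, v) = 1) ∧
    ((xh i = .up ∨ xh i = .down) →
      0 < m (i, false) ∧ m (i, false) < 1 ∧ 0 < m (i, true) ∧ m (i, true) < 1)}

noncomputable def canon {n : ℕ} (xh : MPConfig n) : EPlace n → ℝ := fun p =>
  match xh p.1 with
  | .b v => if p.2 = v then 1 else 0
  | _ => 1/2

def validT {n : ℕ} (D : Fin n → Bool → Set (Clause n)) (t : ETrans n) : Prop :=
  t.C ∈ D t.i t.s

def IsDNF {n : ℕ} (f : BN n) (D : Fin n → Bool → Set (Clause n)) : Prop :=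
  (∀ i s z, (∃ C ∈ D i s, satC z C) ↔ (z i = !s ∧ f z i = s)) ∧
  (∀ i s C, C ∈ D i s → C i = some (!s))

def cReachG {P T : Type} (N : Net P T) (good : T → Prop) :
    (P → ℝ) → (P → ℝ) → Prop :=
  ReflTransGen (fun m m' => ∃ t, good t ∧ ∃ α, cfire N t α m m')

def climReachG {P T : Type} (N : Net P T) (good : T → Prop) (m m' : P → ℝ) : Prop :=
  ∃ ms : ℕ → P → ℝ, ms 0 = m ∧
    (∀ k, ∃ t, good t ∧ ∃ α, cfire N t α (ms k) (ms (k+1))) ∧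
    Tendsto ms atTop (nhds m')

/-! An enabled transition `t` has every place of its clause marked, and a marking in `μ(x̂)`
leaves the place opposite to a Boolean value `x̂_j` empty; so the clause agrees with `x̂` off `i`,
and completing it with the Boolean values of `x̂` gives a binarisation `z ∈ β(x̂)` with `z ⊨ C`.
Soundness of the clause then gives `f_i(z) = 1` (resp. `0`), and at `i` itself it forces
`z_i = 0` (resp. `1`), the only Boolean value `x̂_i ∈ {0, ↘}` (resp. `{1, ↗}`) may hold. -/

def MPV.bin : MPV → Bool
  | .b v => v
  | _ => false

def fillClause {n : ℕ} (C : Clause n) (xh : MPConfig n) : Config n :=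
  fun j => (C j).getD (xh j).bin

lemma satC_fillClause {n : ℕ} (C : Clause n) (xh : MPConfig n) : satC (fillClause C xh) C := by
  intro j v hj
  simp [fillClause, hj]

lemma fillClause_mem_beta {n : ℕ} {C : Clause n} {xh : MPConfig n}
    (hC : ∀ j w v, C j = some w → xh j = .b v → w = v) : fillClause C xh ∈ beta xh := by
  intro j v hxj
  rcases hCj : C j with _ | w
  · simp [fillClause, hCj, hxj, MPV.bin]
  · simpa [fillClause, hCj] using hC j w v hCj hxj

lemma eq_of_mem_mu_of_pos {n : ℕ} {xh : MPConfig n} {m : EPlace n → ℝ} (hm : m ∈ mu xh)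
    {j : Fin n} {v w : Bool} (hxj : xh j = .b v) (hpos : 0 < m (j, w)) : w = v := by
  obtain ⟨hsum, hval, -⟩ := hm.2 j
  have hv := hval v hxj
  cases v <;> cases w <;> first | rfl | linarith

lemma encNet_wPT_pos_of_clause {n : ℕ} {t : ETrans n} {j : Fin n} {w : Bool}
    (hj : j ≠ t.i) (hC : t.C j = some w) : 0 < (encNet n).wPT (j, w) t := by
  simp [encNet, hj, hC]

lemma mpStep_update_transient {n : ℕ} {f : BN n} {xh : MPConfig n} {i : Fin n} {s : Bool}
    (hxi : xh i = .b (!s) ∨ xh i = (if s then .down else .up))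
    {z : Config n} (hz : z ∈ beta xh) (hfz : f z i = s) :
    mpStep f xh (Function.update xh i (if s then .up else .down)) := by
  have hwit : ∃ x ∈ beta xh, f x i = s := ⟨z, hz, hfz⟩
  refine ⟨i, fun j hj => (Function.update_of_ne hj _ _).symm, ?_⟩
  cases s <;> rcases hxi with hxi | hxi <;> simp [hxi, hwit]

/-- `t.s = true` encodes `t ∈ T_i⁺` and `t.s = false` encodes `t ∈ T_i⁻`. -/
theorem enabledness_transfers_to_bn_general {n : ℕ} (f : BN n) (t : ETrans n)
    (hsound : ∀ z : Config n, satC z t.C → z t.i = !t.s ∧ f z t.i = t.s)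
    (xh : MPConfig n) (m : EPlace n → ℝ) (hm : m ∈ mu xh)
    (he : enabPos (encNet n) t m)
    (hx : xh t.i = .b (!t.s) ∨ xh t.i = (if t.s then .down else .up)) :
    ∃ yh : MPConfig n, mpStep f xh yh ∧ (∀ j, j ≠ t.i → yh j = xh j) ∧
      yh t.i = (if t.s then MPV.up else MPV.down) := by
  obtain ⟨hzi, hfz⟩ := hsound _ (satC_fillClause t.C xh)
  have hz : fillClause t.C xh ∈ beta xh := by
    refine fillClause_mem_beta fun j w v hC hxj => ?_
    by_cases hj : j = t.i
    · subst hj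
      have hw : w = !t.s := by simpa [fillClause, hC] using hzi
      cases hs : t.s <;> rcases hx with hx | hx <;> simp_all
    · exact eq_of_mem_mu_of_pos hm hxj (he _ (encNet_wPT_pos_of_clause hj hC))
  exact ⟨_, mpStep_update_transient hx hz hfz, fun j hj => Function.update_of_ne hj _ _,
    Function.update_self ..⟩

/-- enabledness transfers to the MPBN: if a transition
t ∈ T_i⁺ (here `t.s = true`; for T_i⁻ take `t.s = false`, covering the
symmetric case) is enabled at a marking compatible with x̂ and
x̂_i ∈ {0,↘} (resp. {1,↗}), then the MPBN admits the step putting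
variable i into the transient value ↗ (resp. ↘). -/
theorem enabledness_transfers_to_bn {n : ℕ} (f : BN n) (t : ETrans n)
    (hsound : ∀ z : Config n, satC z t.C → z t.i = !t.s ∧ f z t.i = t.s)
    (hCi : t.C t.i = some (!t.s))
    (xh : MPConfig n) (m : EPlace n → ℝ) (hm : m ∈ mu xh)
    (he : enabPos (encNet n) t m)
    (hx : xh t.i = .b (!t.s) ∨ xh t.i = (if t.s then .down else .up)) :
    ∃ yh : MPConfig n, mpStep f xh yh ∧ (∀ j, j ≠ t.i → yh j = xh j) ∧
      yh t.i = (if t.s then MPV.up else MPV.down) :=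
  enabledness_transfers_to_bn_general f t hsound xh m hm he hx
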